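/- Let G be a finite simple graph and let S, S' be vertex sets such that the set 𝓜 of matchings of G with support S and the set 𝓜' of matchings of G with support S' are both nonempty. Let M and M' be independent random matchings, uniformly distributed on 𝓜 and 𝓜' respectively. Then the loop-flip M'' of M' towards M is uniformly distributed on 𝓜'. -/

import Mathlib

/-!
On a cycle component of `M ⊔ M'` every vertex has an `M`-partner and an `M'`-partner, so
swapping the two matchings there keeps both supports: `loopFlip M M'` is a matching with the
support of `M'`, and `loopFlip M' M` one with the support of `M`. The two flips only redistribute
the edges of `M ⊔ M'`, so `(M, M') ↦ (loopFlip M' M, loopFlip M M')` is an involution of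
`𝓜 × 𝓜'`. It carries the pairs whose loop-flip is `N` onto the pairs with second entry `N`,
a copy of `𝓜`.
-/

variable {V : Type*} {G : SimpleGraph V}

/-- The vertex set of the connected component of `v` in the subgraph `H`:
all vertices reachable from `v` using edges of `H`. -/
def reachSet (H : G.Subgraph) (v : V) : Set V := {w | Relation.ReflTransGen H.Adj v w}

/-- `v` lies in a cycle component of the subgraph `H`: its connected component in
`H` is finite and every vertex of the component is incident to exactly two edges
of `H` (i.e. has exactly two neighbours). -/
def InCycleComp (H : G.Subgraph) (v : V) : Prop :=
  (reachSet H v).Finite ∧ ∀ w ∈ reachSet H v, {u | H.Adj w u}.ncard = 2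

lemma reachSet_eq_of_adj {H : G.Subgraph} {v w : V} (h : H.Adj v w) :
    reachSet H v = reachSet H w := by
  ext u
  constructor
  · intro hu
    exact Relation.ReflTransGen.trans (Relation.ReflTransGen.single h.symm) hu
  · intro hu
    exact Relation.ReflTransGen.trans (Relation.ReflTransGen.single h) hu

lemma inCycleComp_iff_of_adj {H : G.Subgraph} {v w : V} (h : H.Adj v w) :
    InCycleComp H v ↔ InCycleComp H w := by
  unfold InCycleComp
  rw [reachSet_eq_of_adj h]

/-- The loop-flip of `M'` towards `M`: the subgraph of `M ⊔ M'` whose edges are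
the edges of `M` lying in a cycle component of `M ⊔ M'` together with the edges
of `M'` not lying in a cycle component of `M ⊔ M'`. Its vertex set is the set of
covered vertices (its support). -/
def loopFlip (M M' : G.Subgraph) : G.Subgraph where
  verts := {v | ∃ w, (M.Adj v w ∧ InCycleComp (M ⊔ M') v) ∨
    (M'.Adj v w ∧ ¬ InCycleComp (M ⊔ M') v)}
  Adj v w := (M.Adj v w ∧ InCycleComp (M ⊔ M') v) ∨
    (M'.Adj v w ∧ ¬ InCycleComp (M ⊔ M') v)
  adj_sub := by
    rintro v w (⟨h, -⟩ | ⟨h, -⟩)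
    · exact M.adj_sub h
    · exact M'.adj_sub h
  edge_vert := by
    intro v w h
    exact ⟨w, h⟩
  symm := by
    constructor
    rintro v w (⟨h, hc⟩ | ⟨h, hc⟩)
    · exact Or.inl ⟨h.symm,
        (inCycleComp_iff_of_adj (H := M ⊔ M')
          (SimpleGraph.Subgraph.sup_adj.mpr (Or.inl h))).mp hc⟩
    · refine Or.inr ⟨h.symm, fun hcw => hc ?_⟩
      exact (inCycleComp_iff_of_adj (H := M ⊔ M')
        (SimpleGraph.Subgraph.sup_adj.mpr (Or.inr h))).mpr hcw

lemma Set.nonempty_of_ncard_union_eq_two {α : Type*} {s t : Set α} (hs : s.Subsingleton)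
    (ht : t.Subsingleton) (h : (s ∪ t).ncard = 2) : s.Nonempty ∧ t.Nonempty := by
  have ncard_le_one {u : Set α} (hu : u.Subsingleton) : u.ncard ≤ 1 :=
    (Set.ncard_le_one hu.finite).mpr fun _ ha _ hb => hu ha hb
  constructor
  · by_contra hse
    rw [Set.not_nonempty_iff_eq_empty.mp hse, Set.empty_union] at h
    have := ncard_le_one ht
    omega
  · by_contra hte
    rw [Set.not_nonempty_iff_eq_empty.mp hte, Set.union_empty] at h
    have := ncard_le_one hs
    omega

namespace SimpleGraph.Subgraph

lemma IsMatching.neighborSet_subsingleton {M : G.Subgraph} (hM : M.IsMatching) (v : V) :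
    (M.neighborSet v).Subsingleton :=
  fun _ ha _ hb => hM.eq_of_adj_left ha hb

lemma IsMatching.mem_verts_iff {M : G.Subgraph} (hM : M.IsMatching) {v : V} :
    v ∈ M.verts ↔ ∃ w, M.Adj v w := by
  rw [← hM.support_eq_verts, mem_support]

end SimpleGraph.Subgraph

open SimpleGraph.Subgraph

lemma InCycleComp.exists_adj_of_isMatching {M M' : G.Subgraph} (hM : M.IsMatching)
    (hM' : M'.IsMatching) {v : V} (hc : InCycleComp (M ⊔ M') v) :
    (∃ w, M.Adj v w) ∧ ∃ w, M'.Adj v w := by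
  have hdeg : (M.neighborSet v ∪ M'.neighborSet v).ncard = 2 := by
    rw [← neighborSet_sup]
    exact hc.2 v Relation.ReflTransGen.refl
  exact Set.nonempty_of_ncard_union_eq_two (hM.neighborSet_subsingleton v)
    (hM'.neighborSet_subsingleton v) hdeg

section loopFlip

variable {M M' : G.Subgraph} {v : V}

lemma loopFlip_adj_of_inCycleComp (hc : InCycleComp (M ⊔ M') v) :
    (loopFlip M M').Adj v = M.Adj v := by
  ext w
  simp only [loopFlip, hc, and_true, not_true_eq_false, and_false, or_false]

lemma loopFlip_adj_of_not_inCycleComp (hc : ¬ InCycleComp (M ⊔ M') v) :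
    (loopFlip M M').Adj v = M'.Adj v := by
  ext w
  simp only [loopFlip, hc, and_false, not_false_eq_true, and_true, false_or]

lemma mem_loopFlip_verts : v ∈ (loopFlip M M').verts ↔ ∃ w, (loopFlip M M').Adj v w :=
  Iff.rfl

lemma loopFlip_verts (hM : M.IsMatching) (hM' : M'.IsMatching) :
    (loopFlip M M').verts = M'.verts := by
  ext v
  rw [mem_loopFlip_verts, hM'.mem_verts_iff]
  by_cases hc : InCycleComp (M ⊔ M') v
  · rw [loopFlip_adj_of_inCycleComp hc]
    exact iff_of_true (hc.exists_adj_of_isMatching hM hM').1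
      (hc.exists_adj_of_isMatching hM hM').2
  · rw [loopFlip_adj_of_not_inCycleComp hc]

lemma loopFlip_isMatching (hM : M.IsMatching) (hM' : M'.IsMatching) :
    (loopFlip M M').IsMatching := by
  intro v hv
  rw [loopFlip_verts hM hM'] at hv
  by_cases hc : InCycleComp (M ⊔ M') v
  · rw [loopFlip_adj_of_inCycleComp hc]
    exact hM (hM.mem_verts_iff.mpr (hc.exists_adj_of_isMatching hM hM').1)
  · rw [loopFlip_adj_of_not_inCycleComp hc]
    exact hM' hv

lemma inCycleComp_sup_comm : InCycleComp (M' ⊔ M) = InCycleComp (M ⊔ M') := by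
  rw [sup_comm]

lemma loopFlip_sup_loopFlip (hM : M.IsMatching) (hM' : M'.IsMatching) :
    loopFlip M' M ⊔ loopFlip M M' = M ⊔ M' := by
  ext v w
  · change v ∈ (loopFlip M' M).verts ∪ (loopFlip M M').verts ↔ v ∈ M.verts ∪ M'.verts
    rw [loopFlip_verts hM' hM, loopFlip_verts hM hM']
  · rw [sup_adj, sup_adj]
    by_cases hc : InCycleComp (M ⊔ M') v
    · rw [loopFlip_adj_of_inCycleComp (inCycleComp_sup_comm ▸ hc),
        loopFlip_adj_of_inCycleComp hc, or_comm]
    · rw [loopFlip_adj_of_not_inCycleComp (inCycleComp_sup_comm ▸ hc),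
        loopFlip_adj_of_not_inCycleComp hc]

lemma loopFlip_loopFlip (hM : M.IsMatching) (hM' : M'.IsMatching) :
    loopFlip (loopFlip M' M) (loopFlip M M') = M' := by
  have hC : InCycleComp (loopFlip M' M ⊔ loopFlip M M') = InCycleComp (M ⊔ M') := by
    rw [loopFlip_sup_loopFlip hM hM']
  ext v w
  · rw [loopFlip_verts (loopFlip_isMatching hM' hM) (loopFlip_isMatching hM hM'),
      loopFlip_verts hM hM']
  · by_cases hc : InCycleComp (M ⊔ M') v
    · rw [loopFlip_adj_of_inCycleComp (hC ▸ hc),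
        loopFlip_adj_of_inCycleComp (inCycleComp_sup_comm ▸ hc)]
    · rw [loopFlip_adj_of_not_inCycleComp (hC ▸ hc), loopFlip_adj_of_not_inCycleComp hc]

end loopFlip
section fiber

variable {S S' : Set V} {N : G.Subgraph}

def loopFlipFiberEquiv (hN : N.IsMatching) (hNv : N.verts = S') :
    {p : G.Subgraph × G.Subgraph |
      (p.1.IsMatching ∧ p.1.verts = S) ∧ (p.2.IsMatching ∧ p.2.verts = S') ∧
      loopFlip p.1 p.2 = N} ≃ {M : G.Subgraph | M.IsMatching ∧ M.verts = S} where
  toFun p := ⟨loopFlip p.1.2 p.1.1, loopFlip_isMatching p.2.2.1.1 p.2.1.1,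
    (loopFlip_verts p.2.2.1.1 p.2.1.1).trans p.2.1.2⟩
  invFun A := ⟨(loopFlip N A.1, loopFlip A.1 N),
    ⟨loopFlip_isMatching hN A.2.1, (loopFlip_verts hN A.2.1).trans A.2.2⟩,
    ⟨loopFlip_isMatching A.2.1 hN, (loopFlip_verts A.2.1 hN).trans hNv⟩,
    loopFlip_loopFlip A.2.1 hN⟩
  left_inv := by
    rintro ⟨⟨M, M'⟩, ⟨hM, -⟩, ⟨hM', -⟩, rfl⟩
    exact Subtype.ext (Prod.ext (loopFlip_loopFlip hM' hM) (loopFlip_loopFlip hM hM'))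
  right_inv := by
    rintro ⟨A, hA, -⟩
    exact Subtype.ext (loopFlip_loopFlip hN hA)

lemma loopFlip_fiber_eq_empty (hN : ¬ (N.IsMatching ∧ N.verts = S')) :
    {p : G.Subgraph × G.Subgraph |
      (p.1.IsMatching ∧ p.1.verts = S) ∧ (p.2.IsMatching ∧ p.2.verts = S') ∧
      loopFlip p.1 p.2 = N} = ∅ := by
  refine Set.eq_empty_of_forall_notMem ?_
  rintro ⟨M, M'⟩ ⟨⟨hM, -⟩, ⟨hM', hM'v⟩, rfl⟩
  exact hN ⟨loopFlip_isMatching hM hM', (loopFlip_verts hM hM').trans hM'v⟩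

end fiber

theorem stmt5_general (S S' : Set V) :
    ∀ N : G.Subgraph,
      ((N.IsMatching ∧ N.verts = S') →
        {p : G.Subgraph × G.Subgraph |
            (p.1.IsMatching ∧ p.1.verts = S) ∧ (p.2.IsMatching ∧ p.2.verts = S') ∧
            loopFlip p.1 p.2 = N}.ncard =
          {M : G.Subgraph | M.IsMatching ∧ M.verts = S}.ncard) ∧
      (¬ (N.IsMatching ∧ N.verts = S') →
        {p : G.Subgraph × G.Subgraph |
            (p.1.IsMatching ∧ p.1.verts = S) ∧ (p.2.IsMatching ∧ p.2.verts = S') ∧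
            loopFlip p.1 p.2 = N}.ncard = 0) := by
  intro N
  constructor
  · rintro ⟨hN, hNv⟩
    rw [← Nat.card_coe_set_eq, ← Nat.card_coe_set_eq]
    exact Nat.card_congr (loopFlipFiberEquiv hN hNv)
  · intro hN
    rw [loopFlip_fiber_eq_empty hN, Set.ncard_empty]

/-- Let `G` be a finite simple graph and `𝓜`, `𝓜'` the (nonempty) sets of
matchings with supports `S`, `S'`. If `M` and `M'` are independent and uniformly
distributed on `𝓜` and `𝓜'`, then the loop-flip of `M'` towards `M` is uniform
on `𝓜'`: for every `N ∈ 𝓜'` the number of pairs `(M, M') ∈ 𝓜 × 𝓜'` with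
loop-flip `N` is `|𝓜| = |𝓜 × 𝓜'| / |𝓜'|`, and for `N ∉ 𝓜'` it is `0`. -/
theorem stmt5 [Fintype V] (S S' : Set V)
    (hne : {M : G.Subgraph | M.IsMatching ∧ M.verts = S}.Nonempty)
    (hne' : {M : G.Subgraph | M.IsMatching ∧ M.verts = S'}.Nonempty) :
    ∀ N : G.Subgraph,
      ((N.IsMatching ∧ N.verts = S') →
        {p : G.Subgraph × G.Subgraph |
            (p.1.IsMatching ∧ p.1.verts = S) ∧ (p.2.IsMatching ∧ p.2.verts = S') ∧
            loopFlip p.1 p.2 = N}.ncard =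
          {M : G.Subgraph | M.IsMatching ∧ M.verts = S}.ncard) ∧
      (¬ (N.IsMatching ∧ N.verts = S') →
        {p : G.Subgraph × G.Subgraph |
            (p.1.IsMatching ∧ p.1.verts = S) ∧ (p.2.IsMatching ∧ p.2.verts = S') ∧
            loopFlip p.1 p.2 = N}.ncard = 0) :=
  stmt5_general S S'
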